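/- Let G be the distance graph of points x₁,...,x_N in ℝ^d (connecting points at Euclidean distance < 1), where each point is at distance at most √3/4 from the line generated by (1,0,...,0). Then the complement graph of G contains no induced cycle of odd length 5 or more. -/

import Mathlib

/-!
Project onto the line: the coordinate `t = ⟪e₁, x⟫` is 1-Lipschitz, and since every point lies
within `√3/4` of the line, Pythagoras shows that points at distance `≥ 1` have coordinates at
least `√(1 - (2 · √3/4)²) = 1/2` apart. Along an induced cycle of the complement, consecutive
vertices are at distance `≥ 1` and vertices two apart at distance `< 1`, so the coordinate steps
around the cycle have size `≥ 1/2` while two successive steps sum to less than `1`: the steps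
alternate in sign. The sign of the step leaving a vertex is then a proper 2-colouring of the
cycle, which is impossible for odd length.
-/

open SimpleGraph

/-- The distance graph of a sequence of points: indices `i ≠ j` are adjacent
when the corresponding points are at distance `< 1`. -/
def distGraph {E : Type*} [NormedAddCommGroup E] {N : ℕ} (x : Fin N → E) :
    SimpleGraph (Fin N) where
  Adj i j := i ≠ j ∧ ‖x i - x j‖ < 1
  symm := by
    refine ⟨?_⟩; intro i j ⟨hij, hd⟩
    exact ⟨hij.symm, by rwa [norm_sub_rev]⟩
  loopless := by refine ⟨?_⟩; intro i ⟨h, _⟩; exact h rfl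

open Metric RealInnerProductSpace

section Projection

variable {E : Type*} [NormedAddCommGroup E] [InnerProductSpace ℝ E]

theorem Submodule.norm_sub_starProjection_le_infDist (K : Submodule ℝ E)
    [K.HasOrthogonalProjection] (x : E) : ‖x - K.starProjection x‖ ≤ infDist x K := by
  refine (le_infDist ⟨0, K.zero_mem⟩).2 fun y hy => ?_
  rw [starProjection_minimal, dist_eq_norm]
  exact ciInf_le ⟨0, Set.forall_mem_range.2 fun _ => norm_nonneg _⟩ (⟨y, hy⟩ : K)

theorem Submodule.norm_sub_sq_le_of_infDist_le (K : Submodule ℝ E) [K.HasOrthogonalProjection]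
    {x y : E} {r : ℝ} (hx : infDist x K ≤ r) (hy : infDist y K ≤ r) :
    ‖x - y‖ ^ 2 ≤ ‖K.starProjection (x - y)‖ ^ 2 + (2 * r) ^ 2 := by
  have hperp : ‖Kᗮ.starProjection (x - y)‖ ≤ 2 * r := by
    rw [starProjection_orthogonal_val, map_sub, sub_sub_sub_comm]
    calc ‖x - K.starProjection x - (y - K.starProjection y)‖
        ≤ ‖x - K.starProjection x‖ + ‖y - K.starProjection y‖ := norm_sub_le _ _
      _ ≤ r + r := add_le_add ((K.norm_sub_starProjection_le_infDist x).trans hx)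
          ((K.norm_sub_starProjection_le_infDist y).trans hy)
      _ = 2 * r := by ring
  have := norm_sq_eq_add_norm_sq_projection (x - y) K
  simp only [Submodule.coe_norm] at this
  rw [this, ← Submodule.starProjection_apply, ← Submodule.starProjection_apply]
  nlinarith [norm_nonneg (Kᗮ.starProjection (x - y))]

theorem norm_starProjection_span_singleton {e : E} (he : ‖e‖ = 1) (v : E) :
    ‖(ℝ ∙ e).starProjection v‖ = |⟪e, v⟫| := by
  rw [Submodule.starProjection_singleton, norm_smul, he]
  simp

theorem one_half_le_abs_inner_sub_of_infDist_le {e x y : E} (he : ‖e‖ = 1)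
    (hx : infDist x (ℝ ∙ e) ≤ √3 / 4) (hy : infDist y (ℝ ∙ e) ≤ √3 / 4) (hxy : 1 ≤ ‖x - y‖) :
    1 / 2 ≤ |⟪e, x - y⟫| := by
  have h := (ℝ ∙ e).norm_sub_sq_le_of_infDist_le hx hy
  rw [norm_starProjection_span_singleton he] at h
  have h3 : √3 ^ 2 = 3 := Real.sq_sqrt (by norm_num)
  nlinarith [abs_nonneg ⟪e, x - y⟫]

end Projection

section Alternating

variable {α : Type*} [CommRing α] [LinearOrder α] [IsStrictOrderedRing α]

theorem mul_neg_of_abs_add_lt {a b c : α} (ha : c ≤ |a|) (hb : c ≤ |b|) (hab : |a + b| < 2 * c) :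
    a * b < 0 := by
  by_contra! h
  rw [(abs_add_eq_add_abs_iff a b).2 (mul_nonneg_iff.1 h), two_mul] at hab
  exact hab.not_ge (add_le_add ha hb)

theorem even_of_forall_mul_add_one_neg {n : ℕ} [NeZero n] (D : Fin n → α)
    (h : ∀ a, D (a + 1) * D a < 0) : Even n := by
  rcases n with _ | _ | m
  · exact Even.zero
  · exact absurd (h 0) (not_lt.2 (mul_self_nonneg (D 0)))
  · by_contra hodd
    have hcol : (cycleGraph (m + 2)).Colorable 2 := by
      refine (Coloring.mk (fun a => decide (0 < D a)) fun {u v} huv => ?_).colorable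
      have hD : D u * D v < 0 := by
        rcases huv with huv | huv <;> rw [sub_eq_iff_eq_add'] at huv <;> subst huv
        · exact h v
        · exact mul_comm (D u) _ ▸ h u
      rcases mul_neg_iff.1 hD with ⟨hu, hv⟩ | ⟨hu, hv⟩ <;> simp [hu, hv, hv.le, hu.le]
    have := hcol.chromaticNumber_le
    rw [chromaticNumber_cycleGraph_of_odd _ (by omega) (Nat.not_even_iff_odd.1 hodd)] at this
    exact absurd this (by norm_num)

end Alternating

theorem distGraph_compl_adj_iff {E : Type*} [NormedAddCommGroup E] {N : ℕ} (x : Fin N → E)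
    (i j : Fin N) : (distGraph x)ᶜ.Adj i j ↔ i ≠ j ∧ 1 ≤ ‖x i - x j‖ := by
  simp only [compl_adj, distGraph, not_and, not_lt]
  tauto

theorem SimpleGraph.Embedding.adj_of_not_adj_compl {V W : Type*} {H : SimpleGraph V}
    {G : SimpleGraph W} (f : H ↪g Gᶜ) {a b : V} (hne : a ≠ b) (hab : ¬ H.Adj a b) :
    G.Adj (f a) (f b) := by
  by_contra h
  exact hab (f.map_adj_iff.1 ⟨f.injective.ne hne, h⟩)

theorem SimpleGraph.cycleGraph_adj_add_one {n : ℕ} (a : Fin (n + 2)) :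
    (cycleGraph (n + 2)).Adj a (a + 1) := by
  simp [cycleGraph_adj]

theorem SimpleGraph.cycleGraph_not_adj_add_two {n : ℕ} (a : Fin (n + 4)) :
    ¬ (cycleGraph (n + 4)).Adj a (a + 2) := by
  rw [cycleGraph_adj, sub_add_cancel_left, add_sub_cancel_left, neg_eq_iff_eq_neg,
    eq_neg_iff_add_eq_zero, not_or]
  simp only [Fin.ext_iff, Fin.val_add, Fin.coe_ofNat_eq_mod, Nat.one_mod, Nat.mod_add_mod,
    Nat.reduceAdd, Nat.zero_mod]
  rw [Nat.mod_eq_of_lt (by omega), Nat.mod_eq_of_lt (by omega)]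
  omega

theorem Fin.ne_add_two {n : ℕ} (a : Fin (n + 3)) : a ≠ a + 2 := by
  simp [Fin.ext_iff, Nat.mod_eq_of_lt (show 2 < n + 3 by omega)]

theorem distGraph_complement_no_long_odd_induced_cycle
    (d N : ℕ) (hd : 1 ≤ d) (x : Fin N → EuclideanSpace ℝ (Fin d))
    (e1 : EuclideanSpace ℝ (Fin d))
    (he1 : e1 = EuclideanSpace.single (⟨0, by omega⟩ : Fin d) (1 : ℝ))
    (L : Set (EuclideanSpace ℝ (Fin d)))
    (hL : L = Set.range (fun t : ℝ => t • e1))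
    (hx : ∀ i, Metric.infDist (x i) L ≤ Real.sqrt 3 / 4) :
    ¬ ∃ n : ℕ, 5 ≤ n ∧ Odd n ∧
      Nonempty (SimpleGraph.cycleGraph n ↪g (distGraph x)ᶜ) := by
  rintro ⟨n, hn5, hodd, ⟨f⟩⟩
  obtain ⟨m, rfl⟩ : ∃ m, n = m + 4 := ⟨n - 4, by omega⟩
  have he : ‖e1‖ = 1 := by simp [he1]
  have hxe : ∀ i, infDist (x i) (ℝ ∙ e1) ≤ √3 / 4 := by
    rwa [Submodule.span_singleton_eq_range, ← hL]
  set t : Fin (m + 4) → ℝ := fun a => ⟪e1, x (f a)⟫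
  have hstep : ∀ a, 1 / 2 ≤ |t (a + 1) - t a| := fun a => by
    obtain ⟨-, hfar⟩ := (distGraph_compl_adj_iff x _ _).1
      (f.map_adj_iff.2 (cycleGraph_adj_add_one a).symm)
    simpa [t, inner_sub_right] using one_half_le_abs_inner_sub_of_infDist_le he (hxe _) (hxe _) hfar
  have htwo : ∀ a, |t (a + 2) - t a| < 1 := fun a => by
    have hnear := (f.adj_of_not_adj_compl (Fin.ne_add_two a).symm
      fun h => cycleGraph_not_adj_add_two a h.symm).2
    calc |t (a + 2) - t a| = |⟪e1, x (f (a + 2)) - x (f a)⟫| := by rw [inner_sub_right]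
      _ ≤ ‖e1‖ * ‖x (f (a + 2)) - x (f a)‖ := abs_real_inner_le_norm _ _
      _ < 1 := by rw [he, one_mul]; exact hnear
  refine Nat.not_even_iff_odd.2 hodd
    (even_of_forall_mul_add_one_neg (fun a => t (a + 1) - t a) fun a => ?_)
  refine mul_neg_of_abs_add_lt (hstep _) (hstep _) ?_
  simp only [sub_add_sub_cancel, add_assoc]
  exact (htwo a).trans_eq (by norm_num)
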